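/- Let M ⊆ ℝⁿ be a compact, closed (without boundary), m-dimensional embedded submanifold of class C². Then the discrete curvature K is uniformly bounded on M^{m+2}, i.e. sup{ K(x₀,…,x_{m+1}) : x₀,…,x_{m+1} ∈ M } < ∞, and the p-energy E_p(M) is finite for every p > 0. -/

import Mathlib

open Metric MeasureTheory Filter
open scoped RealInnerProductSpace ENNReal NNReal

noncomputable section

abbrev Euc (n : ℕ) := EuclideanSpace ℝ (Fin n)

variable {n : ℕ}

/-- Orthogonal projection onto a subspace, as a continuous linear map on the whole space. -/
noncomputable def projCLM (U : Submodule ℝ (Euc n)) : Euc n →L[ℝ] Euc n :=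
  U.subtypeL.comp U.orthogonalProjectionOnto

/-- Orthogonal projection onto the orthogonal complement. -/
noncomputable def QCLM (U : Submodule ℝ (Euc n)) : Euc n →L[ℝ] Euc n :=
  projCLM Uᗮ

/-- The metric on the Grassmannian: operator norm distance of orthogonal projections. -/
noncomputable def dG (U V : Submodule ℝ (Euc n)) : ℝ :=
  ‖projCLM U - projCLM V‖

/-- The cone with axis `Hᗮ` and "angle" `δ`. -/
def angCone (δ : ℝ) (H : Submodule ℝ (Euc n)) : Set (Euc n) :=
  {x | δ * ‖x‖ ≤ ‖QCLM H x‖}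

/-- The shell (n-annulus) of radii `r` and `R`. -/
def shell (r R : ℝ) : Set (Euc n) :=
  Metric.ball (0 : Euc n) R \ Metric.closedBall (0 : Euc n) r

/-- Conical cap: intersection of a cone and a shell. -/
def conicalCap (δ : ℝ) (H : Submodule ℝ (Euc n)) (r R : ℝ) : Set (Euc n) :=
  angCone δ H ∩ shell r R

/-- Symmetrized Hausdorff-type distance: sum of the two one-sided deviations. -/
noncomputable def hDistSum (A B : Set (Euc n)) : ℝ :=
  (⨆ y : A, Metric.infDist (y : Euc n) B) + (⨆ y : B, Metric.infDist (y : Euc n) A)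

/-- Jones β-number (closed-ball version). -/
noncomputable def betaBar (m : ℕ) (S : Set (Euc n)) (x : Euc n) (r : ℝ) : ℝ :=
  (1/r) * ⨅ H : {H : Submodule ℝ (Euc n) // Module.finrank ℝ H = m},
    ⨆ z : ↥(S ∩ Metric.closedBall x r), ‖QCLM H.1 ((z : Euc n) - x)‖

/-- Jones β-number (open-ball version). -/
noncomputable def betaOpen (m : ℕ) (S : Set (Euc n)) (x : Euc n) (r : ℝ) : ℝ :=
  (1/r) * ⨅ H : {H : Submodule ℝ (Euc n) // Module.finrank ℝ H = m},
    ⨆ z : ↥(S ∩ Metric.ball x r), ‖QCLM H.1 ((z : Euc n) - x)‖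

/-- Reifenberg θ-number (closed-ball version). -/
noncomputable def thetaBar (m : ℕ) (S : Set (Euc n)) (x : Euc n) (r : ℝ) : ℝ :=
  (1/r) * ⨅ H : {H : Submodule ℝ (Euc n) // Module.finrank ℝ H = m},
    hDistSum (S ∩ Metric.closedBall x r)
      ((fun v => x + v) '' (H.1 : Set (Euc n)) ∩ Metric.closedBall x r)

/-- Reifenberg θ-number (open-ball version). -/
noncomputable def thetaOpen (m : ℕ) (S : Set (Euc n)) (x : Euc n) (r : ℝ) : ℝ :=
  (1/r) * ⨅ H : {H : Submodule ℝ (Euc n) // Module.finrank ℝ H = m},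
    hDistSum (S ∩ Metric.ball x r)
      ((fun v => x + v) '' (H.1 : Set (Euc n)) ∩ Metric.ball x r)

/-- Discrete Menger-type curvature of an `(m+2)`-tuple of points. -/
noncomputable def discCurv (m : ℕ) (x : Fin (m+2) → Euc n) : ℝ :=
  (μH[((m : ℝ) + 1)] (convexHull ℝ (Set.range x))).toReal / Metric.diam (Set.range x) ^ (m+2)

/-- Iterated lower integral over `k` copies of a measure. -/
noncomputable def multiLIntegral (μ : Measure (Euc n)) :
    (k : ℕ) → ((Fin k → Euc n) → ℝ≥0∞) → ℝ≥0∞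
  | 0, f => f Fin.elim0
  | k+1, f => ∫⁻ x, multiLIntegral μ k (fun v => f (Fin.cons x v)) ∂μ

/-- The `p`-energy of a set: the integral of `K^p` over `(m+2)`-tuples of points of `S`,
with respect to the `m`-dimensional Hausdorff measure restricted to `S`. -/
noncomputable def energy (m : ℕ) (p : ℝ) (S : Set (Euc n)) : ℝ≥0∞ :=
  multiLIntegral ((μH[(m : ℝ)]).restrict S) (m+2) fun x => ENNReal.ofReal (discCurv m x ^ p)

/-- The class `V_k(η,d)` of `(η,d)`-voluminous `(k+1)`-simplices. -/
def IsVol (k : ℕ) (η d : ℝ) (x : Fin (k+2) → Euc n) : Prop :=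
  (∃ c : Euc n, convexHull ℝ (Set.range x) ⊆ Metric.closedBall c d) ∧
  ENNReal.ofReal ((η * d) ^ k) ≤
    μH[(k : ℝ)] (convexHull ℝ (Set.range fun i : Fin (k+1) => x i.castSucc)) ∧
  η * d ≤ Metric.infDist (x (Fin.last (k+1)))
    (affineSpan ℝ (Set.range fun i : Fin (k+1) => x i.castSucc) : Set (Euc n))

/-- Pseudo-distance between two simplices given by vertex tuples. -/
noncomputable def simplexDist (k : ℕ) (x y : Fin (k+2) → Euc n) : ℝ :=
  ⨅ σ : Equiv.Perm (Fin (k+2)), ⨆ i, dist (x i) (y (σ i))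

/-- Best approximating `m`-planes for `S` in the closed ball `B̄(x,r)`. -/
def BAP (m : ℕ) (S : Set (Euc n)) (x : Euc n) (r : ℝ) : Set (Submodule ℝ (Euc n)) :=
  {H | Module.finrank ℝ H = m ∧
    hDistSum (S ∩ Metric.closedBall x r)
      ((fun v => x + v) '' (H : Set (Euc n)) ∩ Metric.closedBall x r) ≤ r * thetaBar m S x r}

/-- `m`-fine sets with constants `A`, `R`, `M`. -/
def IsFine (m : ℕ) (S : Set (Euc n)) (A R M : ℝ) : Prop :=
  IsCompact S ∧ 0 < A ∧ 0 < R ∧ 2 ≤ M ∧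
  (∀ x ∈ S, ∀ r : ℝ, 0 < r → r ≤ R →
    ENNReal.ofReal (A * r ^ m) ≤ μH[(m : ℝ)] (S ∩ Metric.ball x r)) ∧
  (∀ x ∈ S, ∀ r : ℝ, 0 < r → r ≤ R → thetaBar m S x r ≤ M * betaBar m S x r)

/-- `T` is the (m-dimensional) tangent plane of `S` at `x`: the limit in the Grassmannian
metric of best approximating planes as the scale tends to `0`. -/
def IsTangentAt (m : ℕ) (S : Set (Euc n)) (x : Euc n) (T : Submodule ℝ (Euc n)) : Prop :=
  Module.finrank ℝ T = m ∧
  ∀ ε > 0, ∃ r₀ > 0, ∀ r : ℝ, 0 < r → r ≤ r₀ → ∀ H ∈ BAP m S x r, dG T H ≤ ε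

/-
Near each of its points, `M` is the graph `w ↦ x + w + F w` of a `C²` map `F` over an
`m`-plane `H`. By Taylor's theorem, the vertices of an `(m+1)`-simplex of diameter `d` on such
a graph lie within `C d²` of the tangent plane at one of them, so the simplex fits in a box with
`m` sides of length `2d` and one of length `2C d²`, and its `ℋ^(m+1)`-measure is `O(d^(m+2))`:
`K` is bounded on small simplices in each chart. A simplex of diameter at least a Lebesgue
number `δ` of a finite chart cover has measure `O(d^(m+1))`, hence `K = O(1/δ)`. The charts also
give `ℋ^m(M) < ∞`, so the bounded integrand `K^p` has finite integral.
-/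

open Set Module

section Geometry

variable {E : Type*} [NormedAddCommGroup E] [InnerProductSpace ℝ E]

theorem sub_mem_vectorSpan_of_mem_convexHull {s : Set E} {z y : E} (hz : z ∈ convexHull ℝ s)
    (hy : y ∈ s) : z - y ∈ vectorSpan ℝ s := by
  rw [← direction_affineSpan]
  exact AffineSubspace.vsub_mem_direction (convexHull_subset_affineSpan s hz)
    (subset_affineSpan ℝ s hy)

theorem exists_mem_orthogonal_norm_eq_one {U W : Submodule ℝ E} [FiniteDimensional ℝ U]
    [FiniteDimensional ℝ W] (h : finrank ℝ U < finrank ℝ W) :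
    ∃ w ∈ W, w ∈ Uᗮ ∧ ‖w‖ = 1 := by
  obtain ⟨v, hv, hv0⟩ := Submodule.exists_mem_ne_zero_of_ne_bot <|
    LinearMap.ker_ne_bot_of_finrank_lt (f := U.orthogonalProjectionOnto.toLinearMap ∘ₗ W.subtype) h
  have hvU : (v : E) ∈ Uᗮ := Submodule.orthogonalProjectionOnto_eq_zero_iff.1 hv
  have hv0' : (v : E) ≠ 0 := by simpa using hv0
  exact ⟨‖(v : E)‖⁻¹ • (v : E), W.smul_mem _ v.2, Uᗮ.smul_mem _ hvU, norm_smul_inv_norm hv0'⟩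

theorem norm_le_norm_add_of_mem_orthogonal {K : Submodule ℝ E} {a b : E} (ha : a ∈ K)
    (hb : b ∈ Kᗮ) : ‖a‖ ≤ ‖a + b‖ := by
  have h := norm_add_sq_eq_norm_sq_add_norm_sq_real (Submodule.inner_right_of_mem_orthogonal ha hb)
  nlinarith [norm_nonneg a, norm_nonneg (a + b), sq_nonneg ‖b‖]

theorem OrthonormalBasis.sub_eq_sum_inner_smul {ι : Type*} [Fintype ι] {W : Submodule ℝ E}
    (B : OrthonormalBasis ι ℝ W) {z x₀ : E} (h : z - x₀ ∈ W) :
    z = x₀ + ∑ j, ⟪(B j : E), z - x₀⟫ • (B j : E) := by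
  have := congrArg ((↑) : W → E) (B.sum_repr' ⟨z - x₀, h⟩)
  simp only [Submodule.coe_sum, Submodule.coe_smul, Submodule.coe_inner] at this
  rw [this, add_sub_cancel]

variable [MeasurableSpace E] [BorelSpace E]

theorem hausdorffMeasure_eq_zero_of_sub_mem {W : Submodule ℝ E} [FiniteDimensional ℝ W]
    {d : ℝ} (hd : (finrank ℝ W : ℝ) < d) (x₀ : E) {s : Set E} (hs : ∀ z ∈ s, z - x₀ ∈ W) :
    μH[d] s = 0 := by
  set e : W → E := fun w => x₀ + w
  have he : Isometry e := (IsometryEquiv.addLeft x₀).isometry.comp isometry_subtype_coe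
  have hse : s ⊆ range e := fun z hz => ⟨⟨z - x₀, hs z hz⟩, add_sub_cancel x₀ z⟩
  refine measure_mono_null hse ?_
  rw [← image_univ, he.hausdorffMeasure_image (Or.inl ((Nat.cast_nonneg _).trans hd.le)),
    Real.hausdorffMeasure_of_finrank_lt hd, Measure.coe_zero, Pi.zero_apply]

theorem hausdorffMeasure_le_of_abs_inner_le {ι : Type*} [Fintype ι] {W : Submodule ℝ E}
    (B : OrthonormalBasis ι ℝ W) (x₀ : E) (r : ι → ℝ) {s : Set E}
    (hsW : ∀ z ∈ s, z - x₀ ∈ W) (hs : ∀ z ∈ s, ∀ j, |⟪(B j : E), z - x₀⟫| ≤ r j) :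
    μH[Fintype.card ι] s
      ≤ (Fintype.card ι : ℝ≥0∞) ^ Fintype.card ι * ∏ j, ENNReal.ofReal (2 * r j) := by
  set F : (ι → ℝ) → E := fun a => x₀ + ∑ j, a j • (B j : E)
  have hF : LipschitzWith (Fintype.card ι) F := by
    refine LipschitzWith.of_dist_le_mul fun a a' => ?_
    calc dist (F a) (F a') = ‖∑ j, (a j - a' j) • (B j : E)‖ := by
          simp [F, dist_eq_norm, sub_smul, Finset.sum_sub_distrib]
      _ ≤ ∑ j, |a j - a' j| := by
          refine (norm_sum_le _ _).trans_eq (Finset.sum_congr rfl fun j _ => ?_)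
          rw [norm_smul, Submodule.norm_coe, B.orthonormal.1 j, mul_one, Real.norm_eq_abs]
      _ ≤ ∑ _j : ι, dist a a' := Finset.sum_le_sum fun j _ => by
          simpa [Real.dist_eq] using dist_le_pi_dist a a' j
      _ = Fintype.card ι * dist a a' := by simp
  have hsF : s ⊆ F '' Icc (-r) r := fun z hz =>
    ⟨fun j => ⟪(B j : E), z - x₀⟫, ⟨fun j => (abs_le.1 (hs z hz j)).1,
      fun j => (abs_le.1 (hs z hz j)).2⟩, (B.sub_eq_sum_inner_smul (hsW z hz)).symm⟩
  calc μH[Fintype.card ι] s ≤ μH[Fintype.card ι] (F '' Icc (-r) r) := measure_mono hsF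
    _ ≤ (Fintype.card ι : ℝ≥0∞) ^ (Fintype.card ι : ℝ) * μH[Fintype.card ι] (Icc (-r) r) :=
        hF.hausdorffMeasure_image_le (Nat.cast_nonneg _) _
    _ = _ := by
        rw [hausdorffMeasure_pi_real, Real.volume_Icc_pi, ENNReal.rpow_natCast]
        simp [two_mul]

variable {m : ℕ}

theorem hausdorffMeasure_convexHull_eq_zero_of_finrank_lt (x : Fin (m + 2) → E)
    (h : finrank ℝ (vectorSpan ℝ (range x)) < m + 1) :
    μH[(m : ℝ) + 1] (convexHull ℝ (range x)) = 0 :=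
  hausdorffMeasure_eq_zero_of_sub_mem (by exact_mod_cast h) (x 0) fun _ hz =>
    sub_mem_vectorSpan_of_mem_convexHull hz (mem_range_self 0)

theorem hausdorffMeasure_convexHull_le_of_abs_inner_le (x : Fin (m + 2) → E)
    (hW : finrank ℝ (vectorSpan ℝ (range x)) = m + 1) {w : E}
    (hwW : w ∈ vectorSpan ℝ (range x)) (hw : ‖w‖ = 1) {t : ℝ}
    (ht : ∀ i, |⟪w, x i - x 0⟫| ≤ t) :
    μH[(m : ℝ) + 1] (convexHull ℝ (range x))
      ≤ ENNReal.ofReal ((2 * (m + 1)) ^ (m + 1) * diam (range x) ^ m * t) := by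
  set W := vectorSpan ℝ (range x)
  have hdist : ∀ z ∈ convexHull ℝ (range x), ‖z - x 0‖ ≤ diam (range x) := fun z hz => by
    rw [← dist_eq_norm, ← convexHull_diam]
    exact dist_le_diam_of_mem (isBounded_convexHull.2 (finite_range x).isBounded) hz
      (subset_convexHull ℝ _ (mem_range_self 0))
  set d := diam (range x)
  have ht0 : 0 ≤ t := by simpa using ht 0
  have hd0 : 0 ≤ d := diam_nonneg
  have hslab : ∀ z ∈ convexHull ℝ (range x), |⟪w, z - x 0⟫| ≤ t := by
    have hconv : Convex ℝ {z : E | |⟪w, z - x 0⟫| ≤ t} := by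
      have h : {z : E | |⟪w, z - x 0⟫| ≤ t}
          = (fun z => z + -x 0) ⁻¹' (innerₛₗ ℝ w ⁻¹' Icc (-t) t) := by
        ext z
        simp [abs_le, sub_eq_add_neg]
      rw [h]
      exact ((convex_Icc (-t) t).linear_preimage (innerₛₗ ℝ w)).translate_preimage_left (-x 0)
    exact fun z hz => convexHull_min (range_subset_iff.2 ht) hconv hz
  -- In an orthonormal basis of `W` ending with `w`, the hull lies in a box with sides
  -- `2d, …, 2d, 2t`.
  obtain ⟨B, hB⟩ : ∃ B : OrthonormalBasis (Fin (m + 1)) ℝ W, ∀ i ∈ ({Fin.last m} : Set _),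
      B i = (fun _ => (⟨w, hwW⟩ : W)) i :=
    Orthonormal.exists_orthonormalBasis_extension_of_card_eq (by simpa using hW)
      (orthonormal_subsingleton_iff.2 fun _ => by simpa using hw)
  set r : Fin (m + 1) → ℝ := Fin.lastCases t fun _ => d
  have hbox := hausdorffMeasure_le_of_abs_inner_le B (x 0) r
    (fun _ hz => sub_mem_vectorSpan_of_mem_convexHull hz (mem_range_self 0)) fun z hz j => by
      induction j using Fin.lastCases with
      | last => simpa [r, hB (Fin.last m) rfl] using hslab z hz
      | cast i =>
        refine (abs_real_inner_le_norm _ _).trans ?_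
        rw [Submodule.norm_coe, B.orthonormal.1, one_mul]
        simpa [r] using hdist z hz
  have hprod : ∏ j, ENNReal.ofReal (2 * r j)
      = ENNReal.ofReal (2 * d) ^ m * ENNReal.ofReal (2 * t) := by
    simp only [r, Fin.prod_univ_castSucc, Fin.lastCases_castSucc, Fin.lastCases_last,
      Finset.prod_const, Finset.card_univ, Fintype.card_fin]
  rw [hprod, Fintype.card_fin] at hbox
  calc μH[(m : ℝ) + 1] (convexHull ℝ (range x))
      ≤ ((m + 1 : ℕ) : ℝ≥0∞) ^ (m + 1) * (ENNReal.ofReal (2 * d) ^ m * ENNReal.ofReal (2 * t)) := by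
        exact_mod_cast hbox
    _ = ENNReal.ofReal ((2 * (m + 1)) ^ (m + 1) * d ^ m * t) := by
        rw [← ENNReal.ofReal_natCast, ← ENNReal.ofReal_pow (by positivity),
          ← ENNReal.ofReal_pow (by positivity), ← ENNReal.ofReal_mul (by positivity),
          ← ENNReal.ofReal_mul (by positivity)]
        congr 1
        push_cast
        rw [mul_pow, mul_pow]
        ring

theorem hausdorffMeasure_convexHull_le_of_forall_near_submodule (x : Fin (m + 2) → E)
    {U : Submodule ℝ E} [FiniteDimensional ℝ U] (hU : finrank ℝ U ≤ m) {t : ℝ}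
    (h : ∀ i, ∃ u ∈ U, ‖x i - x 0 - u‖ ≤ t) :
    μH[(m : ℝ) + 1] (convexHull ℝ (range x))
      ≤ ENNReal.ofReal ((2 * (m + 1)) ^ (m + 1) * diam (range x) ^ m * t) := by
  rcases (finrank_vectorSpan_range_le ℝ x (Fintype.card_fin _)).lt_or_eq with hlt | hW
  · simp [hausdorffMeasure_convexHull_eq_zero_of_finrank_lt x hlt]
  obtain ⟨w, hwW, hwU, hw⟩ := exists_mem_orthogonal_norm_eq_one
    (W := vectorSpan ℝ (range x)) (hU.trans_lt (by omega))
  refine hausdorffMeasure_convexHull_le_of_abs_inner_le x hW hwW hw fun i => ?_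
  obtain ⟨u, hu, hut⟩ := h i
  calc |⟪w, x i - x 0⟫| = |⟪w, x i - x 0 - u⟫| := by
        rw [inner_sub_right _ _ u, Submodule.inner_left_of_mem_orthogonal hu hwU, sub_zero]
    _ ≤ ‖x i - x 0 - u‖ := by simpa [hw] using abs_real_inner_le_norm w (x i - x 0 - u)
    _ ≤ t := hut

theorem hausdorffMeasure_convexHull_le_diam_pow (x : Fin (m + 2) → E) :
    μH[(m : ℝ) + 1] (convexHull ℝ (range x))
      ≤ ENNReal.ofReal ((2 * (m + 1)) ^ (m + 1) * diam (range x) ^ (m + 1)) := by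
  have := hausdorffMeasure_convexHull_le_of_forall_near_submodule x (U := ⊥) (by simp)
    (t := diam (range x)) fun i => ⟨0, zero_mem _, by
      simpa [dist_eq_norm] using
        dist_le_diam_of_mem (finite_range x).isBounded (mem_range_self i) (mem_range_self 0)⟩
  rwa [mul_assoc, ← pow_succ] at this

end Geometry

section Graph

theorem exists_norm_sub_sub_fderiv_le_sq {V F : Type*} [NormedAddCommGroup V] [NormedSpace ℝ V]
    [NormedAddCommGroup F] [NormedSpace ℝ F] {f : V → F} (hf : ContDiff ℝ 2 f) {S : Set V}
    (hS : IsCompact S) (hSc : Convex ℝ S) :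
    ∃ C : ℝ, 0 ≤ C ∧ ∀ a ∈ S, ∀ b ∈ S, ‖f b - f a - fderiv ℝ f a (b - a)‖ ≤ C * ‖b - a‖ ^ 2 := by
  obtain ⟨K, hK⟩ := (hf.fderiv_right (m := 1) (by norm_num)).contDiffOn.exists_lipschitzOnWith
    one_ne_zero hSc hS
  refine ⟨K, K.2, fun a ha b hb => ?_⟩
  have hbound : ∀ z ∈ segment ℝ a b, ‖fderiv ℝ f z - fderiv ℝ f a‖ ≤ K * ‖b - a‖ := fun z hz =>
    (hK.norm_sub_le (hSc.segment_subset ha hb hz) ha).trans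
      (mul_le_mul_of_nonneg_left (norm_sub_le_of_mem_segment hz) K.2)
  calc ‖f b - f a - fderiv ℝ f a (b - a)‖ ≤ K * ‖b - a‖ * ‖b - a‖ :=
        (convex_segment a b).norm_image_sub_le_of_norm_hasFDerivWithin_le'
          (fun z _ => ((hf.differentiable two_ne_zero) z).hasFDerivAt.hasFDerivWithinAt)
          hbound (left_mem_segment ℝ a b) (right_mem_segment ℝ a b)
    _ = K * ‖b - a‖ ^ 2 := by ring

variable {E : Type*} [NormedAddCommGroup E] [InnerProductSpace ℝ E] {H : Submodule ℝ E}
  {F : H → E}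

theorem inter_ball_subset_image_graph {M : Set E} {x : E} {ρ : ℝ} (hFH : ∀ w, F w ∈ Hᗮ)
    (heq : M ∩ ball x ρ = {y ∈ ball x ρ | ∃ w : H, y = x + w + F w}) :
    M ∩ ball x ρ ⊆ (fun w : H => x + w + F w) '' closedBall 0 ρ := by
  intro y hy
  rw [heq] at hy
  obtain ⟨hyρ, w, rfl⟩ := hy
  refine ⟨w, ?_, rfl⟩
  have hsub : x + w + F w - x = w + F w := by abel
  rw [mem_ball, dist_eq_norm, hsub] at hyρ
  rw [mem_closedBall_zero_iff]
  exact (norm_le_norm_add_of_mem_orthogonal w.2 (hFH w)).trans hyρ.le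

variable [FiniteDimensional ℝ H] [MeasurableSpace E] [BorelSpace E]

theorem exists_hausdorffMeasure_convexHull_graph_le {m : ℕ} (hH : finrank ℝ H ≤ m)
    (hF : ContDiff ℝ 2 F) (hFH : ∀ w, F w ∈ Hᗮ) (x : E) {S : Set H} (hS : IsCompact S)
    (hSc : Convex ℝ S) :
    ∃ C : ℝ, 0 ≤ C ∧ ∀ w : Fin (m + 2) → H, (∀ i, w i ∈ S) →
      μH[(m : ℝ) + 1] (convexHull ℝ (range fun i => x + w i + F (w i)))
        ≤ ENNReal.ofReal (C * diam (range fun i => x + w i + F (w i)) ^ (m + 2)) := by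
  obtain ⟨C, hC0, hC⟩ := exists_norm_sub_sub_fderiv_le_sq hF hS hSc
  refine ⟨(2 * (m + 1)) ^ (m + 1) * C, by positivity, fun w hw => ?_⟩
  set y : Fin (m + 2) → E := fun i => x + w i + F (w i)
  set d := diam (range y)
  have hwd : ∀ i, ‖w i - w 0‖ ≤ d := fun i => by
    have hsplit : y i - y 0 = ((w i - w 0 : H) : E) + (F (w i) - F (w 0)) := by
      simp only [y, Submodule.coe_sub]
      abel
    calc ‖w i - w 0‖ = ‖((w i - w 0 : H) : E)‖ := rfl
      _ ≤ ‖y i - y 0‖ := hsplit ▸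
          norm_le_norm_add_of_mem_orthogonal (w i - w 0).2 (Hᗮ.sub_mem (hFH _) (hFH _))
      _ ≤ d := by
          simpa [dist_eq_norm] using
            dist_le_diam_of_mem (finite_range y).isBounded (mem_range_self i) (mem_range_self 0)
  -- the tangent plane of the graph at `y 0`
  set ψ : H →L[ℝ] E := H.subtypeL + fderiv ℝ F (w 0)
  have hnear : ∀ i, ‖y i - y 0 - ψ (w i - w 0)‖ ≤ C * d ^ 2 := fun i => by
    have : y i - y 0 - ψ (w i - w 0) = F (w i) - F (w 0) - fderiv ℝ F (w 0) (w i - w 0) := by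
      simp only [y, ψ, add_apply, Submodule.subtypeL_apply, Submodule.coe_sub]
      abel
    rw [this]
    exact (hC _ (hw 0) _ (hw i)).trans (by gcongr; exact hwd i)
  calc μH[(m : ℝ) + 1] (convexHull ℝ (range y))
      ≤ ENNReal.ofReal ((2 * (m + 1)) ^ (m + 1) * d ^ m * (C * d ^ 2)) :=
        hausdorffMeasure_convexHull_le_of_forall_near_submodule y
          (U := LinearMap.range (ψ : H →ₗ[ℝ] E)) ((LinearMap.finrank_range_le _).trans hH)
          fun i => ⟨ψ (w i - w 0), LinearMap.mem_range_self _ _, hnear i⟩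
    _ = ENNReal.ofReal ((2 * (m + 1)) ^ (m + 1) * C * d ^ (m + 2)) := by ring_nf

theorem hausdorffMeasure_image_graph_lt_top (hF : ContDiff ℝ 1 F) (x : E) {S : Set H}
    (hS : IsCompact S) : μH[finrank ℝ H] ((fun w : H => x + w + F w) '' S) < ⊤ := by
  have hG : ContDiff ℝ 1 fun w : H => x + w + F w :=
    (contDiff_const.add H.subtypeL.contDiff).add hF
  obtain ⟨K, hK⟩ := hG.locallyLipschitz.locallyLipschitzOn.exists_lipschitzOnWith_of_compact hS
  calc μH[finrank ℝ H] ((fun w : H => x + w + F w) '' S)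
      ≤ (K : ℝ≥0∞) ^ (finrank ℝ H : ℝ) * μH[finrank ℝ H] S :=
        hK.hausdorffMeasure_image_le (Nat.cast_nonneg _)
    _ < ⊤ := ENNReal.mul_lt_top
        (ENNReal.rpow_lt_top_of_nonneg (Nat.cast_nonneg _) ENNReal.coe_ne_top) hS.measure_lt_top

end Graph

theorem IsCompact.exists_forall_le_of_local_of_le_diam {α : Type*} [PseudoMetricSpace α]
    {K : Set α} (hK : IsCompact K) {k : ℕ} {g : (Fin (k + 1) → α) → ℝ}
    (hloc : ∀ x ∈ K, ∃ ρ > 0, ∃ C, ∀ y : Fin (k + 1) → α, (∀ i, y i ∈ K ∩ ball x ρ) → g y ≤ C)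
    (hfar : ∀ δ > 0, ∃ C, ∀ y : Fin (k + 1) → α, (∀ i, y i ∈ K) → δ ≤ diam (range y) → g y ≤ C) :
    ∃ B, ∀ y : Fin (k + 1) → α, (∀ i, y i ∈ K) → g y ≤ B := by
  choose! ρ hρ C hC using hloc
  obtain ⟨t, htK, htfin, hcover⟩ := hK.elim_finite_subcover_image
    (c := fun x => ball x (ρ x)) (fun _ _ => isOpen_ball)
    fun x hx => mem_biUnion hx (mem_ball_self (hρ x hx))
  obtain ⟨δ, hδ, hleb⟩ := lebesgue_number_lemma_of_metric hK
    (c := fun x : t => ball (x : α) (ρ x)) (fun _ => isOpen_ball)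
    (by simpa only [biUnion_eq_iUnion] using hcover)
  obtain ⟨B, hB⟩ := (htfin.image C).bddAbove
  obtain ⟨C', hC'⟩ := hfar δ hδ
  refine ⟨max B C', fun y hy => ?_⟩
  rcases lt_or_ge (diam (range y)) δ with hsmall | hlarge
  · obtain ⟨⟨x, hxt⟩, hball⟩ := hleb (y 0) (hy 0)
    have hyx : ∀ i, y i ∈ K ∩ ball x (ρ x) := fun i => ⟨hy i, hball <|
      (dist_le_diam_of_mem (finite_range y).isBounded (mem_range_self i)
        (mem_range_self 0)).trans_lt hsmall⟩
    exact le_max_of_le_left ((hC x (htK hxt) y hyx).trans (hB (mem_image_of_mem C hxt)))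
  · exact le_max_of_le_right (hC' y hy hlarge)

section Curvature

variable {m : ℕ}

theorem discCurv_nonneg (x : Fin (m + 2) → Euc n) : 0 ≤ discCurv m x :=
  div_nonneg ENNReal.toReal_nonneg (pow_nonneg diam_nonneg _)

theorem discCurv_le_of_hausdorffMeasure_le {x : Fin (m + 2) → Euc n} {C : ℝ} (hC : 0 ≤ C)
    (h : μH[(m : ℝ) + 1] (convexHull ℝ (range x)) ≤ ENNReal.ofReal (C * diam (range x) ^ (m + 2))) :
    discCurv m x ≤ C := by
  rw [discCurv]
  rcases (diam_nonneg (s := range x)).eq_or_lt with h0 | hpos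
  · rw [← h0, zero_pow (by omega), div_zero]
    exact hC
  · rw [div_le_iff₀ (by positivity)]
    exact ENNReal.toReal_le_of_le_ofReal (by positivity) h

theorem discCurv_le_of_le_diam {x : Fin (m + 2) → Euc n} {δ : ℝ} (hδ : 0 < δ)
    (h : δ ≤ diam (range x)) : discCurv m x ≤ (2 * (m + 1)) ^ (m + 1) / δ := by
  refine discCurv_le_of_hausdorffMeasure_le (by positivity)
    ((hausdorffMeasure_convexHull_le_diam_pow x).trans (ENNReal.ofReal_le_ofReal ?_))
  set c : ℝ := (2 * (m + 1)) ^ (m + 1)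
  calc c * diam (range x) ^ (m + 1) = c / δ * (δ * diam (range x) ^ (m + 1)) := by
        field_simp
    _ ≤ c / δ * (diam (range x) * diam (range x) ^ (m + 1)) := by gcongr
    _ = c / δ * diam (range x) ^ (m + 2) := by ring

theorem discCurv_bounded_and_hausdorffMeasure_lt_top_of_graph {M : Set (Euc n)} {x : Euc n}
    {H : Submodule ℝ (Euc n)} (hH : finrank ℝ H = m) {ρ : ℝ} {F : H → Euc n}
    (hF : ContDiff ℝ 2 F) (hFH : ∀ w, F w ∈ Hᗮ)
    (heq : M ∩ ball x ρ = {y ∈ ball x ρ | ∃ w : H, y = x + w + F w}) :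
    (∃ C, ∀ y : Fin (m + 2) → Euc n, (∀ i, y i ∈ M ∩ ball x ρ) → discCurv m y ≤ C) ∧
      μH[(m : ℝ)] (M ∩ ball x ρ) < ⊤ := by
  have hsub := inter_ball_subset_image_graph hFH heq
  obtain ⟨C, hC0, hC⟩ := exists_hausdorffMeasure_convexHull_graph_le hH.le hF hFH x
    (isCompact_closedBall 0 ρ) (convex_closedBall 0 ρ)
  refine ⟨⟨C, fun y hy => ?_⟩, (measure_mono hsub).trans_lt ?_⟩
  · choose w hw hwy using fun i => hsub (hy i)
    obtain rfl : y = fun i => x + w i + F (w i) := funext fun i => (hwy i).symm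
    exact discCurv_le_of_hausdorffMeasure_le hC0 (hC w hw)
  · exact hH ▸ hausdorffMeasure_image_graph_lt_top (hF.of_le (by norm_num)) x
      (isCompact_closedBall 0 ρ)

theorem multiLIntegral_restrict_le {μ : Measure (Euc n)} {S : Set (Euc n)} (hS : MeasurableSet S)
    {c : ℝ≥0∞} : ∀ {k : ℕ} {f : (Fin k → Euc n) → ℝ≥0∞}, (∀ v, (∀ i, v i ∈ S) → f v ≤ c) →
      multiLIntegral (μ.restrict S) k f ≤ c * μ S ^ k
  | 0, f, hf => by simpa [multiLIntegral] using hf Fin.elim0 fun i => i.elim0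
  | k + 1, f, hf => by
    calc multiLIntegral (μ.restrict S) (k + 1) f
        ≤ ∫⁻ _, c * μ S ^ k ∂μ.restrict S :=
          setLIntegral_mono' hS fun a ha =>
            multiLIntegral_restrict_le hS fun v hv => hf _ (Fin.cases ha hv)
      _ = c * μ S ^ (k + 1) := by
          rw [lintegral_const, Measure.restrict_apply_univ, pow_succ, mul_assoc]

theorem energy_lt_top_of_discCurv_le {p : ℝ} {S : Set (Euc n)} (hS : MeasurableSet S)
    (hSfin : μH[(m : ℝ)] S < ⊤) {B : ℝ} (hB : ∀ x, (∀ i, x i ∈ S) → discCurv m x ≤ B)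
    (hp : 0 ≤ p) : energy m p S < ⊤ :=
  (multiLIntegral_restrict_le hS fun x hx => ENNReal.ofReal_le_ofReal
      (Real.rpow_le_rpow (discCurv_nonneg x) (hB x hx) hp)).trans_lt
    (ENNReal.mul_lt_top ENNReal.ofReal_lt_top (ENNReal.pow_lt_top hSfin))

end Curvature

theorem statement11_general (n m : ℕ)
    (M : Set (Euc n)) (hM : IsCompact M)
    (hgraph : ∀ x ∈ M, ∃ H : Submodule ℝ (Euc n), Module.finrank ℝ H = m ∧
      ∃ r > (0:ℝ), ∃ f : ↥H → ↥Hᗮ,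
        ContDiff ℝ 2 (fun w : ↥H => (↑(f w) : Euc n)) ∧
        M ∩ Metric.ball x r
          = {y ∈ Metric.ball x r | ∃ w : ↥H, y = x + (↑w : Euc n) + (↑(f w) : Euc n)}) :
    (∃ B : ℝ, ∀ x : Fin (m+2) → Euc n, (∀ i, x i ∈ M) → discCurv m x ≤ B) ∧
    (∀ p : ℝ, 0 < p → energy m p M < ⊤) := by
  have hloc : ∀ x ∈ M, ∃ ρ > 0,
      (∃ C, ∀ y : Fin (m + 2) → Euc n, (∀ i, y i ∈ M ∩ ball x ρ) → discCurv m y ≤ C) ∧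
        μH[(m : ℝ)] (M ∩ ball x ρ) < ⊤ := fun x hx => by
    obtain ⟨H, hH, ρ, hρ, f, hf, heq⟩ := hgraph x hx
    exact ⟨ρ, hρ,
      discCurv_bounded_and_hausdorffMeasure_lt_top_of_graph hH hf (fun w => (f w).2) heq⟩
  choose! ρ hρ hK hfin using hloc
  obtain ⟨B, hB⟩ := hM.exists_forall_le_of_local_of_le_diam (fun x hx => ⟨ρ x, hρ x hx, hK x hx⟩)
    fun δ hδ => ⟨_, fun y _ hy => discCurv_le_of_le_diam hδ hy⟩
  have hMfin : μH[(m : ℝ)] M < ⊤ := hM.measure_lt_top_of_nhdsWithin fun x hx =>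
    ⟨_, inter_mem_nhdsWithin M (ball_mem_nhds x (hρ x hx)), hfin x hx⟩
  exact ⟨⟨B, hB⟩, fun p hp => energy_lt_top_of_discCurv_le hM.isClosed.measurableSet hMfin hB hp.le⟩

/-- a compact, closed, `m`-dimensional embedded `C²` submanifold of `ℝⁿ`
(described by local `C²` graph representations) has uniformly bounded discrete curvature
and finite `p`-energy for every `p > 0`. -/
theorem statement11 (n m : ℕ) (hm : 0 < m) (hmn : m < n)
    (M : Set (Euc n)) (hM : IsCompact M)
    (hgraph : ∀ x ∈ M, ∃ H : Submodule ℝ (Euc n), Module.finrank ℝ H = m ∧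
      ∃ r > (0:ℝ), ∃ f : ↥H → ↥Hᗮ,
        ContDiff ℝ 2 (fun w : ↥H => (↑(f w) : Euc n)) ∧
        M ∩ Metric.ball x r
          = {y ∈ Metric.ball x r | ∃ w : ↥H, y = x + (↑w : Euc n) + (↑(f w) : Euc n)}) :
    (∃ B : ℝ, ∀ x : Fin (m+2) → Euc n, (∀ i, x i ∈ M) → discCurv m x ≤ B) ∧
    (∀ p : ℝ, 0 < p → energy m p M < ⊤) :=
  statement11_general n m M hM hgraph
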